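/- Let A be a closed, densely defined linear operator on a complex Hilbert space H with 0 ∈ ρ(A), and suppose the family (P_n, A_n)_{n∈ℕ} approximates A strongly. Let s_1, …, s_m ∈ ρ(A) be such that sup_n ‖(A_n − s_j)⁻¹‖ < ∞ for all j = 1, …, m. Let 0 < ε < 1/max_{j} ‖(A − s_j)⁻¹‖ and δ_j > ‖(A−s_j)⁻¹‖²ε/(1 − ‖(A−s_j)⁻¹‖ε) for all j. Then there exists n₀ ∈ ℕ such that σ_ε(A) ⊂ ⋂_{j=1}^m [ (B_{δ_j}(W((A_n − s_j)⁻¹)))⁻¹ + s_j ] for all n ≥ n₀. -/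

import Mathlib

open Filter Topology Metric

noncomputable section

variable {H : Type*} [NormedAddCommGroup H] [InnerProductSpace ℂ H] [CompleteSpace H]

/-- `R : H →L[ℂ] H` is a (two-sided, everywhere defined) bounded inverse of `A - lam`,
i.e. `lam` belongs to the resolvent set of `A` with resolvent `R`. -/
def IsResolventAt (A : H →ₗ.[ℂ] H) (lam : ℂ) (R : H →L[ℂ] H) : Prop :=
  (∀ x : A.domain, R (A x - lam • (x : H)) = (x : H)) ∧
  ∀ y : H, ∃ hy : R y ∈ A.domain, A ⟨R y, hy⟩ - lam • R y = y

/-- The resolvent set `ρ(A)` of a (possibly unbounded) operator `A`. -/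
def presolventSet (A : H →ₗ.[ℂ] H) : Set ℂ :=
  {lam | ∃ R, IsResolventAt A lam R}

-- The resolvent operator `(A - lam)⁻¹` (with junk value `0` off the resolvent set).
open scoped Classical in
def resolventOf (A : H →ₗ.[ℂ] H) (lam : ℂ) : H →L[ℂ] H :=
  if h : ∃ R, IsResolventAt A lam R then h.choose else 0

/-- The `ε`-pseudospectrum `σ_ε(A) = {λ : ‖(A-λ)⁻¹‖ > 1/ε}`, where `‖(A-λ)⁻¹‖` is
understood as `∞` for `λ` in the spectrum. -/
def pseudoSpectrum (ε : ℝ) (A : H →ₗ.[ℂ] H) : Set ℂ :=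
  {lam | lam ∉ presolventSet A ∨ 1 / ε < ‖resolventOf A lam‖}

/-- The numerical range `W(T) = {⟨T x, x⟩ : ‖x‖ = 1}` of a bounded operator `T`;
`⟨T x, x⟩` (inner product linear in the first argument) is written as
`inner x (T x)` in the mathlib convention. -/
def numRange (T : H →L[ℂ] H) : Set ℂ :=
  {z | ∃ x : H, ‖x‖ = 1 ∧ z = (inner ℂ x (T x) : ℂ)}

/-- The numerical range of a (possibly unbounded) operator. -/
def pnumRange (A : H →ₗ.[ℂ] H) : Set ℂ :=
  {z | ∃ x : A.domain, ‖(x : H)‖ = 1 ∧ z = (inner ℂ (x : H) (A x) : ℂ)}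

/-- The numerical radius of a bounded operator. -/
def nradius (T : H →L[ℂ] H) : ℝ :=
  sSup ((fun z => ‖z‖) '' numRange T)

/-- The numerical range of a bounded operator on a subspace `U` of `H`. -/
def numRangeSub {U : Submodule ℂ H} (T : U →L[ℂ] U) : Set ℂ :=
  {z | ∃ x : U, ‖(x : H)‖ = 1 ∧ z = (inner ℂ (x : H) ((T x : U) : H) : ℂ)}

/-- `B_δ(U) = {z : dist (z, U) < δ}`, the `δ`-neighborhood of a set `U ⊆ ℂ`. -/
def nbhdSet (δ : ℝ) (U : Set ℂ) : Set ℂ :=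
  {z | ∃ u ∈ U, dist z u < δ}

/-- `U⁻¹ = {z⁻¹ : z ∈ U \ {0}}`. -/
def invSet (U : Set ℂ) : Set ℂ :=
  {z | ∃ u ∈ U, u ≠ 0 ∧ z = u⁻¹}

/-- `U + s = {z + s : z ∈ U}`. -/
def shiftSet (U : Set ℂ) (s : ℂ) : Set ℂ :=
  {z | ∃ u ∈ U, z = u + s}

/-!
Fix `s ∈ ρ(A)`, `R = (A - s)⁻¹` and, for `λ ≠ s`, `z = (λ - s)⁻¹`. If `z` has distance at least
`c > 0` from `W(R)`, then `W(R - z)` avoids the disc of radius `c`, so `R - z` is invertible with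
`‖(R - z)⁻¹‖ ≤ 1/c`; hence `λ ∈ ρ(A)` and `‖(A - λ)⁻¹‖ = ‖R - R (R - z)⁻¹ R‖ ≤ ‖R‖ + ‖R‖²/c`.
For `λ ∈ σ_ε(A)` this forces `c < ‖R‖²ε/(1 - ‖R‖ε)`, so `z` lies within any `δ` above that bound
of `W(R)`.

By the resolvent identity and the uniform bound on `‖(A_n - s)⁻¹‖`, `(A_n - s)⁻¹ P_n → R`
strongly, so every point of `W(R)` is a limit of points of `W((A_n - s)⁻¹)`. As `W(R)` is
bounded, for large `n` it lies in an arbitrarily small neighbourhood of `W((A_n - s)⁻¹)`, and the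
gap between `δ` and `‖R‖²ε/(1 - ‖R‖ε)` absorbs this error.
-/

open scoped InnerProductSpace

variable {E : Type*} [NormedAddCommGroup E] [InnerProductSpace ℂ E]

section NumericalRange

theorem numRangeSub_eq_numRange {U : Submodule ℂ E} (T : U →L[ℂ] U) :
    numRangeSub T = numRange T :=
  rfl

theorem numRange_subset_closedBall (T : E →L[ℂ] E) : numRange T ⊆ closedBall 0 ‖T‖ := by
  rintro _ ⟨x, hx, rfl⟩
  rw [mem_closedBall_zero_iff]
  simpa [hx] using (norm_inner_le_norm x (T x)).trans
    (mul_le_mul_of_nonneg_left (T.le_opNorm x) (norm_nonneg x))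

theorem inner_map_div_norm_sq_mem_numRange (T : E →L[ℂ] E) {x : E} (hx : x ≠ 0) :
    ⟪x, T x⟫_ℂ / (‖x‖ ^ 2 : ℂ) ∈ numRange T := by
  refine ⟨(‖x‖⁻¹ : ℂ) • x, ?_, ?_⟩
  · rw [norm_smul]
    simp [hx]
  · rw [map_smul, inner_smul_left, inner_smul_right]
    simp only [map_inv₀, Complex.conj_ofReal]
    field_simp

theorem numRange_sub_smul_one (T : E →L[ℂ] E) (z : ℂ) :
    numRange (T - z • 1) = (· - z) '' numRange T := by
  ext w
  simp only [numRange, Set.mem_image, Set.mem_ofPred_eq]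
  constructor
  · rintro ⟨x, hx, rfl⟩
    refine ⟨_, ⟨x, hx, rfl⟩, ?_⟩
    simp [inner_self_eq_norm_sq_to_K, hx]
  · rintro ⟨_, ⟨x, hx, rfl⟩, rfl⟩
    refine ⟨x, hx, ?_⟩
    simp [inner_self_eq_norm_sq_to_K, hx]

theorem norm_sq_mul_le_norm_inner_of_forall_mem_numRange_le_norm {T : E →L[ℂ] E} {c : ℝ}
    (h : ∀ w ∈ numRange T, c ≤ ‖w‖) (x : E) : ‖x‖ ^ 2 * c ≤ ‖⟪T x, x⟫_ℂ‖ := by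
  rcases eq_or_ne x 0 with rfl | hx
  · simp
  have hcx := h _ (inner_map_div_norm_sq_mem_numRange T hx)
  rw [norm_div, norm_inner_symm, norm_pow, Complex.norm_real, norm_norm,
    le_div_iff₀ (pow_pos (norm_pos_iff.2 hx) 2)] at hcx
  linarith

theorem exists_inverse_of_forall_mem_numRange_le_norm [CompleteSpace E] (T : E →L[ℂ] E) {c : ℝ}
    (hc : 0 < c) (h : ∀ w ∈ numRange T, c ≤ ‖w‖) :
    ∃ S : E →L[ℂ] E, S * T = 1 ∧ T * S = 1 ∧ ‖S‖ ≤ c⁻¹ := by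
  lift c to NNReal using hc.le
  have hc' : 0 < c := mod_cast hc
  have hT := norm_sq_mul_le_norm_inner_of_forall_mem_numRange_le_norm h
  obtain ⟨u, rfl⟩ := T.isUnit_of_forall_le_norm_inner_map hc' hT
  have hanti := ContinuousLinearMap.antilipschitz_of_forall_le_inner_map _ hc' hT
  refine ⟨↑u⁻¹, u.inv_mul, u.mul_inv,
    ContinuousLinearMap.opNorm_le_bound _ (by positivity) fun y ↦ ?_⟩
  have hy : (u : E →L[ℂ] E) ((↑u⁻¹ : E →L[ℂ] E) y) = y := by
    rw [← mul_apply_eq_comp, u.mul_inv, one_apply_eq_self]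
  simpa [hy, mul_comm] using hanti.le_mul_norm (map_zero _) ((↑u⁻¹ : E →L[ℂ] E) y)

end NumericalRange

section Resolvent

theorem IsResolventAt.resolventOf_eq {A : E →ₗ.[ℂ] E} {lam : ℂ} {R : E →L[ℂ] E}
    (h : IsResolventAt A lam R) : resolventOf A lam = R := by
  have hex : ∃ R', IsResolventAt A lam R' := ⟨R, h⟩
  rw [resolventOf, dif_pos hex]
  ext y
  obtain ⟨hy, hAy⟩ := h.2 y
  simpa [hAy] using hex.choose_spec.1 ⟨R y, hy⟩

theorem isResolventAt_resolventOf {A : E →ₗ.[ℂ] E} {lam : ℂ} (h : lam ∈ presolventSet A) :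
    IsResolventAt A lam (resolventOf A lam) := by
  obtain ⟨R, hR⟩ := h
  rwa [hR.resolventOf_eq]

theorem IsResolventAt.apply_add_sub_smul {A : E →ₗ.[ℂ] E} {mu s : ℂ} {R₀ R : E →L[ℂ] E}
    (h₀ : IsResolventAt A mu R₀) (h : IsResolventAt A s R) (x : E) :
    R₀ (x + (s - mu) • R x) = R x := by
  obtain ⟨hy, hAy⟩ := h.2 x
  have hA : A ⟨R x, hy⟩ - mu • R x = x + (s - mu) • R x := by
    linear_combination (norm := module) hAy
  simpa [hA] using h₀.1 ⟨R x, hy⟩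

/-- With `z = (λ - s)⁻¹`, `A - λ = -(λ - s) (A - s) (R - z)`, so `(A - λ)⁻¹ = -z (R - z)⁻¹ R`,
which equals `R - R (R - z)⁻¹ R`. -/
theorem IsResolventAt.sub_mul_mul {A : E →ₗ.[ℂ] E} {s lam : ℂ} {R S : E →L[ℂ] E}
    (hR : IsResolventAt A s R) (hlam : lam ≠ s)
    (hSl : S * (R - (lam - s)⁻¹ • 1) = 1) (hSr : (R - (lam - s)⁻¹ • 1) * S = 1) :
    IsResolventAt A lam (R - R * S * R) := by
  set z := (lam - s)⁻¹
  have hz : (lam - s) * z = 1 := mul_inv_cancel₀ (sub_ne_zero.2 hlam)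
  have hSR : ∀ y, S (R y) = y + z • S y := fun y ↦ by
    have := congrArg (· y) hSl
    simp only [mul_apply_eq_comp, sub_apply, smul_apply, one_apply_eq_self, map_sub, map_smul]
      at this
    linear_combination (norm := module) this
  have hRS : ∀ y, R (S y) = y + z • S y := fun y ↦ by
    have := congrArg (· y) hSr
    simp only [mul_apply_eq_comp, sub_apply, smul_apply, one_apply_eq_self] at this
    linear_combination (norm := module) this
  constructor
  · intro x
    have hRA : R (A x) = x + s • R x := by
      have := hR.1 x
      rw [map_sub, map_smul] at this
      linear_combination (norm := module) this
    simp only [mul_apply_eq_comp, sub_apply, map_sub, map_smul, hRA, map_add, hSR, hRS]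
    linear_combination (norm := module) hz • (x : E) + (z * hz) • S x
  · intro y
    have hQ : (R - R * S * R) y = R (-z • S y) := by
      simp only [mul_apply_eq_comp, sub_apply, hSR, map_add, map_smul]
      module
    obtain ⟨hv, hAv⟩ := hR.2 (-z • S y)
    refine ⟨hQ ▸ hv, ?_⟩
    have hdom : (⟨_, hQ ▸ hv⟩ : A.domain) = ⟨R (-z • S y), hv⟩ := Subtype.ext hQ
    rw [hdom, hQ]
    simp only [map_smul, hRS] at hAv ⊢
    linear_combination (norm := module) hAv + hz • y + (z * hz) • S y

theorem norm_resolventOf_le_of_le_dist_numRange [CompleteSpace E] {A : E →ₗ.[ℂ] E} {s lam : ℂ}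
    {R : E →L[ℂ] E} (hR : IsResolventAt A s R) (hlam : lam ≠ s) {c : ℝ} (hc : 0 < c)
    (h : ∀ w ∈ numRange R, c ≤ dist (lam - s)⁻¹ w) :
    lam ∈ presolventSet A ∧ ‖resolventOf A lam‖ ≤ ‖R‖ + ‖R‖ ^ 2 / c := by
  have hcT : ∀ w ∈ numRange (R - (lam - s)⁻¹ • 1), c ≤ ‖w‖ := by
    rw [numRange_sub_smul_one]
    rintro _ ⟨w, hw, rfl⟩
    simpa [dist_eq_norm, norm_sub_rev] using h w hw
  obtain ⟨S, hSl, hSr, hS⟩ := exists_inverse_of_forall_mem_numRange_le_norm _ hc hcT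
  have hres := hR.sub_mul_mul hlam hSl hSr
  refine ⟨⟨_, hres⟩, ?_⟩
  calc ‖resolventOf A lam‖ = ‖R - R * S * R‖ := by rw [hres.resolventOf_eq]
    _ ≤ ‖R‖ + ‖R‖ * ‖S‖ * ‖R‖ := (norm_sub_le _ _).trans (by gcongr; exact norm_mul₃_le)
    _ ≤ ‖R‖ + ‖R‖ * c⁻¹ * ‖R‖ := by gcongr
    _ = ‖R‖ + ‖R‖ ^ 2 / c := by ring

theorem pseudoSpectrum_subset_shiftSet_invSet_nbhdSet_numRange [CompleteSpace E]
    {A : E →ₗ.[ℂ] E} {s : ℂ} (hs : s ∈ presolventSet A) {ε δ : ℝ} (hε0 : 0 < ε)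
    (hε : ‖resolventOf A s‖ * ε < 1)
    (hδ : ‖resolventOf A s‖ ^ 2 * ε / (1 - ‖resolventOf A s‖ * ε) < δ) :
    pseudoSpectrum ε A ⊆ shiftSet (invSet (nbhdSet δ (numRange (resolventOf A s)))) s := by
  set r := ‖resolventOf A s‖
  have hδ0 : 0 < δ := lt_of_le_of_lt (by have := norm_nonneg (resolventOf A s); positivity) hδ
  have hbound : r + r ^ 2 / δ < 1 / ε := by
    rw [div_lt_iff₀ (by linarith)] at hδ
    rw [lt_div_iff₀ hε0, add_mul, div_mul_eq_mul_div, ← lt_sub_iff_add_lt', div_lt_iff₀ hδ0]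
    linarith
  intro lam hlam
  have hne : lam ≠ s := by
    rintro rfl
    rcases hlam with hlam | hlam
    · exact hlam hs
    · rw [div_lt_iff₀ hε0] at hlam
      exact hlam.not_gt hε
  have hnear : ∃ w ∈ numRange (resolventOf A s), dist (lam - s)⁻¹ w < δ := by
    by_contra! hfar
    obtain ⟨hmem, hle⟩ := norm_resolventOf_le_of_le_dist_numRange
      (isResolventAt_resolventOf hs) hne hδ0 hfar
    rcases hlam with hlam | hlam
    · exact hlam hmem
    · linarith
  obtain ⟨w, hw, hdist⟩ := hnear
  exact ⟨lam - s, ⟨(lam - s)⁻¹, ⟨w, hw, hdist⟩, inv_ne_zero (sub_ne_zero.2 hne), (inv_inv _).symm⟩,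
    (sub_add_cancel _ _).symm⟩

end Resolvent

theorem nbhdSet_subset_nbhdSet_add {V W : Set ℂ} {γ : ℝ} (h : V ⊆ nbhdSet γ W) (δ : ℝ) :
    nbhdSet δ V ⊆ nbhdSet (δ + γ) W := by
  rintro z ⟨v, hv, hzv⟩
  obtain ⟨w, hw, hvw⟩ := h hv
  exact ⟨w, hw, (dist_triangle z v w).trans_lt (add_lt_add hzv hvw)⟩

theorem invSet_mono {V W : Set ℂ} (h : V ⊆ W) : invSet V ⊆ invSet W := by
  rintro z ⟨v, hv, hv0, rfl⟩
  exact ⟨v, h hv, hv0, rfl⟩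

theorem shiftSet_mono {V W : Set ℂ} (h : V ⊆ W) (s : ℂ) : shiftSet V s ⊆ shiftSet W s := by
  rintro z ⟨v, hv, rfl⟩
  exact ⟨v, h hv, rfl⟩

theorem TotallyBounded.eventually_subset_nbhdSet {ι : Type*} {l : Filter ι} {S : Set ℂ}
    (hS : TotallyBounded S) {V : ι → Set ℂ} {γ γ' : ℝ} (hγ : γ < γ')
    (h : ∀ w ∈ S, ∀ᶠ i in l, w ∈ nbhdSet γ (V i)) : ∀ᶠ i in l, S ⊆ nbhdSet γ' (V i) := by
  obtain ⟨t, htS, htfin, hcover⟩ := finite_approx_of_totallyBounded hS (γ' - γ) (sub_pos.2 hγ)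
  filter_upwards [(eventually_all_finite htfin).2 fun y hy ↦ h y (htS hy)] with i hi w hw
  obtain ⟨y, hy, hwy⟩ := Set.mem_iUnion₂.1 (hcover hw)
  obtain ⟨v, hv, hyv⟩ := hi y hy
  refine ⟨v, hv, (dist_triangle w y v).trans_lt ?_⟩
  linarith [mem_ball.1 hwy]

section Approximation

variable {ι : Type*} {l : Filter ι} {U : ι → Submodule ℂ E} {P : ι → E →L[ℂ] E}
  (hPmem : ∀ i x, P i x ∈ U i)

theorem tendsto_resolventOf_apply_of_approx {A : E →ₗ.[ℂ] E} (h0 : (0 : ℂ) ∈ presolventSet A)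
    (hPconv : ∀ x, Tendsto (fun i ↦ P i x) l (𝓝 x)) {T Tinv : ∀ i, U i →L[ℂ] U i}
    (hTinv : ∀ i u, T i (Tinv i u) = u)
    (happrox : ∀ x, Tendsto (fun i ↦ (Tinv i ⟨P i x, hPmem i x⟩ : E)) l (𝓝 (resolventOf A 0 x)))
    {s : ℂ} (hs : s ∈ presolventSet A) {Q : ∀ i, U i →L[ℂ] U i}
    (hQ : ∀ i u, Q i (T i u - s • u) = u) {C : ℝ} (hC : ∀ i, ‖Q i‖ ≤ C) (x : E) :
    Tendsto (fun i ↦ (Q i ⟨P i x, hPmem i x⟩ : E)) l (𝓝 (resolventOf A s x)) := by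
  set y := resolventOf A s x
  -- `w = A y`
  set w := x + s • y
  set z : ∀ i, U i := fun i ↦ Tinv i ⟨P i w, hPmem i w⟩
  have hz : Tendsto (fun i ↦ (z i : E)) l (𝓝 y) := by
    have hw : resolventOf A 0 w = y := by
      simpa only [sub_zero] using
        (isResolventAt_resolventOf h0).apply_add_sub_smul (isResolventAt_resolventOf hs) x
    simpa [hw] using happrox w
  have hsplit : ∀ i, Q i ⟨P i x, hPmem i x⟩ = z i - s • Q i (⟨P i y, hPmem i y⟩ - z i) := by
    intro i
    have hPw : (⟨P i w, hPmem i w⟩ : U i) = ⟨P i x, hPmem i x⟩ + s • ⟨P i y, hPmem i y⟩ :=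
      Subtype.ext (by simp [w])
    have h := hQ i (z i)
    rw [hTinv, hPw, show ∀ a b c : U i, a + s • b - s • c = a + s • (b - c) by intros; module,
      map_add, map_smul] at h
    exact eq_sub_of_add_eq h
  have hsmall : Tendsto (fun i ↦ (Q i (⟨P i y, hPmem i y⟩ - z i) : E)) l (𝓝 0) := by
    refine squeeze_zero_norm (fun i ↦ ?_) (by simpa using ((hPconv y).sub hz).norm.const_mul C)
    exact ((Q i).le_opNorm _).trans (mul_le_mul_of_nonneg_right (hC i) (norm_nonneg _))
  simpa [hsplit] using hz.sub (hsmall.const_smul s)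

theorem eventually_mem_nbhdSet_numRangeSub (hPconv : ∀ x, Tendsto (fun i ↦ P i x) l (𝓝 x))
    {Q : ∀ i, U i →L[ℂ] U i} {R : E →L[ℂ] E}
    (hQ : ∀ x, Tendsto (fun i ↦ (Q i ⟨P i x, hPmem i x⟩ : E)) l (𝓝 (R x)))
    {w : ℂ} (hw : w ∈ numRange R) {γ : ℝ} (hγ : 0 < γ) :
    ∀ᶠ i in l, w ∈ nbhdSet γ (numRangeSub (Q i)) := by
  obtain ⟨x, hx, rfl⟩ := hw
  have hnorm : Tendsto (fun i ↦ (‖P i x‖ : ℂ) ^ 2) l (𝓝 1) := by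
    simpa [hx] using ((Complex.continuous_ofReal.tendsto _).comp (hPconv x).norm).pow 2
  have hlim : Tendsto (fun i ↦ ⟪P i x, (Q i ⟨P i x, hPmem i x⟩ : E)⟫_ℂ / (‖P i x‖ : ℂ) ^ 2) l
      (𝓝 ⟪x, R x⟫_ℂ) := by
    rw [← div_one ⟪x, R x⟫_ℂ]
    exact ((hPconv x).inner (hQ x)).div hnorm one_ne_zero
  have hne : ∀ᶠ i in l, P i x ≠ 0 := (hPconv x).eventually_ne (norm_ne_zero_iff.1 (by simp [hx]))
  filter_upwards [hne, Metric.tendsto_nhds.1 hlim γ hγ] with i hi hdist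
  refine ⟨_, ?_, by rwa [dist_comm]⟩
  rw [numRangeSub_eq_numRange]
  exact inner_map_div_norm_sq_mem_numRange (Q i) (x := ⟨P i x, hPmem i x⟩) (by simpa using hi)

theorem eventually_numRange_subset_nbhdSet_numRangeSub
    (hPconv : ∀ x, Tendsto (fun i ↦ P i x) l (𝓝 x)) {Q : ∀ i, U i →L[ℂ] U i} {R : E →L[ℂ] E}
    (hQ : ∀ x, Tendsto (fun i ↦ (Q i ⟨P i x, hPmem i x⟩ : E)) l (𝓝 (R x))) {γ : ℝ} (hγ : 0 < γ) :
    ∀ᶠ i in l, numRange R ⊆ nbhdSet γ (numRangeSub (Q i)) :=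
  TotallyBounded.eventually_subset_nbhdSet
    ((isCompact_closedBall 0 ‖R‖).totallyBounded.subset (numRange_subset_closedBall R))
    (half_lt_self hγ) fun _ hw ↦ eventually_mem_nbhdSet_numRangeSub hPmem hPconv hQ hw (half_pos hγ)

end Approximation

theorem pseudospectrum_subset_iInter_shifted_approx_general
    (A : H →ₗ.[ℂ] H)
    (h0 : (0 : ℂ) ∈ presolventSet A)
    (U : ℕ → Submodule ℂ H)
    (P : ℕ → H →L[ℂ] H)
    (hPmem : ∀ n x, P n x ∈ U n)
    (hPconv : ∀ x : H, Tendsto (fun n => P n x) atTop (𝓝 x))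
    (T : ∀ n, ↥(U n) →L[ℂ] ↥(U n)) (Tinv : ∀ n, ↥(U n) →L[ℂ] ↥(U n))
    (hTinv : ∀ n, (∀ u, Tinv n (T n u) = u) ∧ ∀ u, T n (Tinv n u) = u)
    (happrox : ∀ x : H,
      Tendsto (fun n => (↑(Tinv n ⟨P n x, hPmem n x⟩) : H)) atTop
        (𝓝 (resolventOf A 0 x)))
    (m : ℕ) (s : Fin m → ℂ) (hs : ∀ j, s j ∈ presolventSet A)
    (Rn : Fin m → ∀ n, ↥(U n) →L[ℂ] ↥(U n))
    (hRn : ∀ j n, (∀ u, Rn j n (T n u - s j • u) = u) ∧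
      ∀ u, T n (Rn j n u) - s j • Rn j n u = u)
    (hRb : ∀ j, ∃ C : ℝ, ∀ n, ‖Rn j n‖ ≤ C)
    (hne : (Finset.univ : Finset (Fin m)).Nonempty)
    (ε : ℝ) (hε0 : 0 < ε)
    (hε : ε < 1 / Finset.sup' Finset.univ hne (fun j => ‖resolventOf A (s j)‖))
    (δ : Fin m → ℝ)
    (hδ : ∀ j, ‖resolventOf A (s j)‖ ^ 2 * ε / (1 - ‖resolventOf A (s j)‖ * ε)
      < δ j) :
    ∃ n₀ : ℕ, ∀ n ≥ n₀,
      pseudoSpectrum ε A ⊆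
        ⋂ j : Fin m,
          shiftSet (invSet (nbhdSet (δ j) (numRangeSub (Rn j n)))) (s j) := by
  have hRε : ∀ j, ‖resolventOf A (s j)‖ * ε < 1 := fun j ↦ by
    have hM := one_div_pos.1 (hε0.trans hε)
    rw [lt_div_iff₀ hM] at hε
    nlinarith [Finset.le_sup' (fun j ↦ ‖resolventOf A (s j)‖) (Finset.mem_univ j)]
  set γ : Fin m → ℝ := fun j ↦
    (δ j - ‖resolventOf A (s j)‖ ^ 2 * ε / (1 - ‖resolventOf A (s j)‖ * ε)) / 2
  have hexact : ∀ j, pseudoSpectrum ε A ⊆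
      shiftSet (invSet (nbhdSet (δ j - γ j) (numRange (resolventOf A (s j))))) (s j) := fun j ↦
    pseudoSpectrum_subset_shiftSet_invSet_nbhdSet_numRange (hs j) hε0 (hRε j)
      (by simp only [γ]; linarith [hδ j])
  have hnear : ∀ᶠ n in atTop, ∀ j,
      numRange (resolventOf A (s j)) ⊆ nbhdSet (γ j) (numRangeSub (Rn j n)) := by
    refine eventually_all.2 fun j ↦ ?_
    obtain ⟨C, hC⟩ := hRb j
    exact eventually_numRange_subset_nbhdSet_numRangeSub hPmem hPconv
      (tendsto_resolventOf_apply_of_approx hPmem h0 hPconv (fun n ↦ (hTinv n).2) happrox (hs j)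
        (fun n ↦ (hRn j n).1) hC) (half_pos (sub_pos.2 (hδ j)))
  obtain ⟨n₀, hn₀⟩ := eventually_atTop.1 hnear
  refine ⟨n₀, fun n hn ↦ Set.subset_iInter fun j ↦ (hexact j).trans ?_⟩
  have := shiftSet_mono (invSet_mono (nbhdSet_subset_nbhdSet_add (hn₀ n hn j) (δ j - γ j))) (s j)
  rwa [sub_add_cancel] at this

/-- Theorem 3.6. -/
theorem pseudospectrum_subset_iInter_shifted_approx
    (A : H →ₗ.[ℂ] H)
    (hclosed : IsClosed (A.graph : Set (H × H)))
    (hdense : Dense (A.domain : Set H))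
    (h0 : (0 : ℂ) ∈ presolventSet A)
    (U : ℕ → Submodule ℂ H) (hUfin : ∀ n, FiniteDimensional ℂ (U n))
    (P : ℕ → H →L[ℂ] H)
    (hPmem : ∀ n x, P n x ∈ U n)
    (hPproj : ∀ n, ∀ x ∈ U n, P n x = x)
    (hPconv : ∀ x : H, Tendsto (fun n => P n x) atTop (𝓝 x))
    (T : ∀ n, ↥(U n) →L[ℂ] ↥(U n)) (Tinv : ∀ n, ↥(U n) →L[ℂ] ↥(U n))
    (hTinv : ∀ n, (∀ u, Tinv n (T n u) = u) ∧ ∀ u, T n (Tinv n u) = u)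
    (happrox : ∀ x : H,
      Tendsto (fun n => (↑(Tinv n ⟨P n x, hPmem n x⟩) : H)) atTop
        (𝓝 (resolventOf A 0 x)))
    (m : ℕ) (s : Fin m → ℂ) (hs : ∀ j, s j ∈ presolventSet A)
    (Rn : Fin m → ∀ n, ↥(U n) →L[ℂ] ↥(U n))
    (hRn : ∀ j n, (∀ u, Rn j n (T n u - s j • u) = u) ∧
      ∀ u, T n (Rn j n u) - s j • Rn j n u = u)
    (hRb : ∀ j, ∃ C : ℝ, ∀ n, ‖Rn j n‖ ≤ C)
    (hne : (Finset.univ : Finset (Fin m)).Nonempty)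
    (ε : ℝ) (hε0 : 0 < ε)
    (hε : ε < 1 / Finset.sup' Finset.univ hne (fun j => ‖resolventOf A (s j)‖))
    (δ : Fin m → ℝ)
    (hδ : ∀ j, ‖resolventOf A (s j)‖ ^ 2 * ε / (1 - ‖resolventOf A (s j)‖ * ε)
      < δ j) :
    ∃ n₀ : ℕ, ∀ n ≥ n₀,
      pseudoSpectrum ε A ⊆
        ⋂ j : Fin m,
          shiftSet (invSet (nbhdSet (δ j) (numRangeSub (Rn j n)))) (s j) :=
  pseudospectrum_subset_iInter_shifted_approx_general A h0 U P hPmem hPconv T Tinv hTinv happrox m s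
    hs Rn hRn hRb hne ε hε0 hε δ hδ
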